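/- arXiv:2012.04093 — 8 statements merged into one kernel-verified Lean document; each statement's English description precedes it below -/
import Mathlib

section
/- For every n : ℕ, the operation Fadd n makes the level-n set a commutative monoid with identity E^[n] 0: for all a, b, c in Set.range (E^[n]), one has Fadd n a b ∈ Set.range (E^[n]), Fadd n a (E^[n] 0) = a, Fadd n (E^[n] 0) a = a, Fadd n a b = Fadd n b a, and Fadd n a (Fadd n b c) = Fadd n (Fadd n a b) c. (This is the additive part of the paper's Theorem that the level-n set with F_n and F_{n+1} is a commutative semiring.) -/
/-- The exponential function `E a = w ^ a` on ℕ, for a fixed base `w`. -/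
def E (w : ℕ) (a : ℕ) : ℕ := w ^ a

/-- Bennett's commutative hyperoperation `F_n` (level-`n` addition):
`Fadd w n a b = E^[n] (L^[n] a + L^[n] b)` where `L = Nat.log w`. -/
def Fadd (w : ℕ) (n : ℕ) (a b : ℕ) : ℕ :=
  (E w)^[n] ((Nat.log w)^[n] a + (Nat.log w)^[n] b)

/-- Bennett's commutative hyperoperation `F_{n+1}` (level-`n` multiplication):
`Fmul w n a b = E^[n] (L^[n] a * L^[n] b)` where `L = Nat.log w`. -/
def Fmul (w : ℕ) (n : ℕ) (a b : ℕ) : ℕ :=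
  (E w)^[n] ((Nat.log w)^[n] a * (Nat.log w)^[n] b)

/-! `E^[n]` transports addition on ℕ to `Fadd n` on the level-`n` set, since `L^[n]` is a left
inverse of `E^[n]`; the monoid laws are therefore those of `(ℕ, +, 0)`. -/

theorem leftInverse_log_E {w : ℕ} (hw : 1 < w) : Function.LeftInverse (Nat.log w) (E w) :=
  Nat.log_pow hw

theorem Fadd_iterate_E {w : ℕ} (hw : 1 < w) (n x y : ℕ) :
    Fadd w n ((E w)^[n] x) ((E w)^[n] y) = (E w)^[n] (x + y) := by
  rw [Fadd, (leftInverse_log_E hw).iterate n x, (leftInverse_log_E hw).iterate n y]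

/-- The level-`n` set with `Fadd n` is a commutative monoid with identity `E^[n] 0`. -/
theorem Fadd_comm_monoid (w : ℕ) (hw : 2 ≤ w) (n : ℕ) :
    ∀ a ∈ Set.range ((E w)^[n]), ∀ b ∈ Set.range ((E w)^[n]),
      ∀ c ∈ Set.range ((E w)^[n]),
      Fadd w n a b ∈ Set.range ((E w)^[n]) ∧
      Fadd w n a ((E w)^[n] 0) = a ∧
      Fadd w n ((E w)^[n] 0) a = a ∧
      Fadd w n a b = Fadd w n b a ∧
      Fadd w n a (Fadd w n b c) = Fadd w n (Fadd w n a b) c := by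
  rintro a ⟨x, rfl⟩ b ⟨y, rfl⟩ c ⟨z, rfl⟩
  simp only [Fadd_iterate_E hw]
  exact ⟨⟨x + y, rfl⟩, by rw [add_zero], by rw [zero_add], by rw [add_comm], by rw [add_assoc]⟩
end

section
/- For every n : ℕ and all a, b in the level-(n+1) set Set.range (E^[n+1]), the orderings at consecutive levels agree: a <_n b if and only if a <_{n+1} b. Explicitly, (there exists c ∈ Set.range (E^[n]) with c ≠ E^[n] 0 and Fadd n a c = b) if and only if (there exists c ∈ Set.range (E^[n+1]) with c ≠ E^[n+1] 0 and Fadd (n+1) a c = b). -/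
/-!
On the level-`n` set, `E^[n]` is a bijection from `ℕ` conjugating `Fadd w n` to ordinary
addition, so `a <_n b` for `a = E^[n] x`, `b = E^[n] z` just says `x < z`. Writing level-`(n+1)`
elements as `E^[n+1] α = E^[n] (w ^ α)`, both orderings therefore reduce to
`w ^ α < w ^ β ↔ α < β`, the strict monotonicity of `w ^ ·`.
-/

/-- The ordering `<_n` on the level-`n` set. -/
def LevelLT (w n a b : ℕ) : Prop :=
  ∃ c ∈ Set.range ((E w)^[n]), c ≠ (E w)^[n] 0 ∧ Fadd w n a c = b

section

variable {w : ℕ}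

theorem log_leftInverse_E (hw : 1 < w) : Function.LeftInverse (Nat.log w) (E w) :=
  Nat.log_pow hw

theorem E_iterate_injective (hw : 1 < w) (n : ℕ) : Function.Injective ((E w)^[n]) :=
  ((log_leftInverse_E hw).iterate n).injective

theorem Fadd_E_iterate (hw : 1 < w) (n x y : ℕ) :
    Fadd w n ((E w)^[n] x) ((E w)^[n] y) = (E w)^[n] (x + y) := by
  rw [Fadd, (log_leftInverse_E hw).iterate n, (log_leftInverse_E hw).iterate n]

theorem levelLT_E_iterate_iff (hw : 1 < w) {n x z : ℕ} :
    LevelLT w n ((E w)^[n] x) ((E w)^[n] z) ↔ x < z := by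
  simp only [LevelLT, Set.exists_range_iff, Fadd_E_iterate hw,
    (E_iterate_injective hw n).ne_iff, (E_iterate_injective hw n).eq_iff]
  constructor
  · rintro ⟨y, hy, rfl⟩
    omega
  · intro hxz
    exact ⟨z - x, by omega, by omega⟩

end

/-- For `a`, `b` in the level-`(n+1)` set, the orderings `<_n` and `<_{n+1}` agree. -/
theorem lt_level_succ_iff (w : ℕ) (hw : 2 ≤ w) (n : ℕ) :
    ∀ a ∈ Set.range ((E w)^[n+1]), ∀ b ∈ Set.range ((E w)^[n+1]),
      ((∃ c ∈ Set.range ((E w)^[n]), c ≠ (E w)^[n] 0 ∧ Fadd w n a c = b) ↔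
       (∃ c ∈ Set.range ((E w)^[n+1]), c ≠ (E w)^[n+1] 0 ∧
          Fadd w (n+1) a c = b)) := by
  rintro a ⟨α, rfl⟩ b ⟨β, rfl⟩
  change LevelLT w n _ _ ↔ LevelLT w (n + 1) _ _
  rw [levelLT_E_iterate_iff hw, Function.iterate_succ_apply, Function.iterate_succ_apply,
    levelLT_E_iterate_iff hw]
  exact Nat.pow_lt_pow_iff_right hw
end

section
/- For every n : ℕ, every a in the level-n set Set.range (E^[n]), and every k : ℕ, iterating the level-n successor S_n (where S_n c = E^[n] (L^[n] c + 1)) k times starting from a yields Fadd n a (E^[n] k); that is, (fun c => E^[n] (L^[n] c + 1))^[k] a = Fadd n a (E^[n] k). (This encodes the paper's Proposition that the regular hyperoperation a [n:1] b built from the successor S_n coincides with the commutative hyperoperation F_n(a,b).) -/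
theorem log_iterate_leftInverse_E_iterate {w : ℕ} (hw : 2 ≤ w) (n : ℕ) :
    Function.LeftInverse (Nat.log w)^[n] (E w)^[n] :=
  Function.LeftInverse.iterate (fun x => Nat.log_pow hw x) n

theorem Function.LeftInverse.iterate_conj_succ {α : Type*} {f : ℕ → α} {g : α → ℕ}
    (hgf : Function.LeftInverse g f) (m k : ℕ) :
    (fun c => f (g c + 1))^[k] (f m) = f (m + k) := by
  induction k with
  | zero => rfl
  | succ k ih => rw [Function.iterate_succ_apply', ih, hgf, add_assoc]

/-- Iterating the level-`n` successor `S_n c = E^[n] (L^[n] c + 1)` `k` times starting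
from a level-`n` element `a` yields `Fadd n a (E^[n] k)`. -/
theorem succ_iterate_eq_Fadd (w : ℕ) (hw : 2 ≤ w) (n : ℕ) :
    ∀ a ∈ Set.range ((E w)^[n]), ∀ k : ℕ,
      (fun c => (E w)^[n] ((Nat.log w)^[n] c + 1))^[k] a = Fadd w n a ((E w)^[n] k) := by
  rintro a ⟨m, rfl⟩ k
  have hinv := log_iterate_leftInverse_E_iterate hw n
  rw [Fadd, hinv, hinv]
  exact hinv.iterate_conj_succ m k
end

section
/- For every n : ℕ and all a, b in the level-(n+1) set Set.range (E^[n+1]), level-(n+1) addition of a and b equals the (L^[n] b)-fold Fadd-n-sum of copies of a: Fadd (n+1) a b = (fun c => Fadd n a c)^[(L^[n]) b] (E^[n] 0). (This encodes the paper's Lemma that a [n:1] b equals b-many copies of a combined with the level-(n-1) addition.) -/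
/-! Since `w ^ (x + y) = w ^ x * w ^ y`, level-`(n+1)` addition is level-`n` multiplication on the
level-`(n+1)` set, and level-`n` multiplication by `k` is `k`-fold level-`n` addition, because
`L^[n]` undoes `E^[n]`. -/

section

variable {w : ℕ}

lemma E_add (a b : ℕ) : E w (a + b) = E w a * E w b :=
  pow_add w a b

lemma log_E (hw : 1 < w) (a : ℕ) : Nat.log w (E w a) = a :=
  Nat.log_pow hw a

lemma iterate_log_iterate_E (hw : 1 < w) (n a : ℕ) :
    (Nat.log w)^[n] ((E w)^[n] a) = a :=
  (Function.LeftInverse.iterate (log_E hw) n) a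

lemma iterate_log_iterate_E_succ (hw : 1 < w) (n a : ℕ) :
    (Nat.log w)^[n] ((E w)^[n + 1] a) = E w a := by
  rw [Function.iterate_succ_apply, iterate_log_iterate_E hw]

lemma iterate_Fadd_iterate_E_zero (hw : 1 < w) (n a k : ℕ) :
    (fun c => Fadd w n a c)^[k] ((E w)^[n] 0) = (E w)^[n] (k * (Nat.log w)^[n] a) := by
  induction k with
  | zero => simp
  | succ k ih =>
    rw [Function.iterate_succ_apply', ih, Fadd, iterate_log_iterate_E hw, add_one_mul, add_comm]

lemma Fadd_succ_eq_Fmul (hw : 1 < w) (n : ℕ) {a b : ℕ} (ha : a ∈ Set.range ((E w)^[n + 1]))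
    (hb : b ∈ Set.range ((E w)^[n + 1])) : Fadd w (n + 1) a b = Fmul w n a b := by
  obtain ⟨x, rfl⟩ := ha
  obtain ⟨y, rfl⟩ := hb
  rw [Fadd, Fmul, iterate_log_iterate_E hw, iterate_log_iterate_E hw,
    iterate_log_iterate_E_succ hw, iterate_log_iterate_E_succ hw, Function.iterate_succ_apply,
    E_add]

end

/-- For `a`, `b` in the level-`(n+1)` set, level-`(n+1)` addition of `a` and `b`
is the `(L^[n] b)`-fold `Fadd n`-sum of copies of `a`. -/
theorem Fadd_succ_eq_iterate (w : ℕ) (hw : 2 ≤ w) (n : ℕ) :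
    ∀ a ∈ Set.range ((E w)^[n+1]), ∀ b ∈ Set.range ((E w)^[n+1]),
      Fadd w (n+1) a b = (fun c => Fadd w n a c)^[(Nat.log w)^[n] b] ((E w)^[n] 0) := by
  intro a ha b hb
  rw [Fadd_succ_eq_Fmul hw n ha hb, iterate_Fadd_iterate_E_zero hw, Fmul, mul_comm]
end

section
/- For every n : ℕ, every a in the level-(n+1) set Set.range (E^[n+1]), and every k : ℕ, iterating the map c ↦ Fmul n a c k times starting from the multiplicative identity E^[n] 1 yields Fmul (n+1) a (E^[n+1] k); that is, (fun c => Fmul n a c)^[k] (E^[n] 1) = Fmul (n+1) a (E^[n+1] k). (This encodes the paper's Proposition that a [n:3] b = a [n+1:2] E(b), i.e. level-n exponentiation of a by E^[n] k equals level-(n+1) multiplication of a by E^[n+1] k.) -/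
/-!
Since `L^[n]` inverts `E^[n]`, the map `E^[n]` conjugates ordinary multiplication to level-`n`
multiplication, so iterating `Fmul n (E^[n] x)` corresponds to iterating `(x * ·)`, which gives
`x ^ k`. For `a = E^[n+1] m` we have `x = w ^ m`, and `(w ^ m) ^ k = E (m * k)`, while by the
same conjugation `Fmul (n+1) a (E^[n+1] k) = E^[n+1] (m * k)`.
-/

section

variable {w : ℕ}

lemma log_iterate_E_iterate (hw : 1 < w) (n x : ℕ) :
    (Nat.log w)^[n] ((E w)^[n] x) = x := by
  induction n generalizing x with
  | zero => rfl
  | succ n ih =>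
    rw [Function.iterate_succ_apply (E w), Function.iterate_succ_apply', ih, E, Nat.log_pow hw]

lemma Fmul_E_iterate (hw : 1 < w) (n x y : ℕ) :
    Fmul w n ((E w)^[n] x) ((E w)^[n] y) = (E w)^[n] (x * y) := by
  rw [Fmul, log_iterate_E_iterate hw, log_iterate_E_iterate hw]

lemma semiconj_E_iterate_mul_Fmul (hw : 1 < w) (n x : ℕ) :
    Function.Semiconj ((E w)^[n]) (x * ·) (Fmul w n ((E w)^[n] x)) :=
  fun y => (Fmul_E_iterate hw n x y).symm

lemma Fmul_E_iterate_iterate (hw : 1 < w) (n x k y : ℕ) :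
    (Fmul w n ((E w)^[n] x))^[k] ((E w)^[n] y) = (E w)^[n] (x ^ k * y) := by
  rw [← (semiconj_E_iterate_mul_Fmul hw n x).iterate_right k y, mul_left_iterate_apply]

end

/-- For `a` in the level-`(n+1)` set, iterating `c ↦ Fmul n a c` `k` times from the
multiplicative identity `E^[n] 1` yields `Fmul (n+1) a (E^[n+1] k)`. -/
theorem Fmul_iterate_eq_Fmul_succ (w : ℕ) (hw : 2 ≤ w) (n : ℕ) :
    ∀ a ∈ Set.range ((E w)^[n+1]), ∀ k : ℕ,
      (fun c => Fmul w n a c)^[k] ((E w)^[n] 1) = Fmul w (n+1) a ((E w)^[n+1] k) := by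
  rintro a ⟨m, rfl⟩ k
  calc (Fmul w n ((E w)^[n+1] m))^[k] ((E w)^[n] 1)
      = (E w)^[n] ((w ^ m) ^ k * 1) := by
        rw [Function.iterate_succ_apply, E, ← Fmul_E_iterate_iterate hw]
    _ = (E w)^[n + 1] (m * k) := by
        rw [Function.iterate_succ_apply, E, mul_one, pow_mul]
    _ = Fmul w (n + 1) ((E w)^[n+1] m) ((E w)^[n+1] k) := (Fmul_E_iterate hw _ m k).symm
end

section
/- For every n : ℕ and all x, y, u, v ∈ Set.range (E^[n]): Fadd n x v = Fadd n y u if and only if Fadd (n+1) (w ^ x) (w ^ v) = Fadd (n+1) (w ^ y) (w ^ u). (This is the paper's Proposition that (x,y) □_n (u,v) iff (E x, E y) □_{n+1} (E u, E v), showing that E generates an isomorphism between consecutive difference-class groups.) -/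
lemma Fadd_succ_pow_pow (w : ℕ) (hw : 2 ≤ w) (n a b : ℕ) :
    Fadd w (n + 1) (w ^ a) (w ^ b) = w ^ Fadd w n a b := by
  rw [Fadd, Function.iterate_succ_apply (Nat.log w), Function.iterate_succ_apply (Nat.log w),
    Function.iterate_succ_apply' (E w), Nat.log_pow hw, Nat.log_pow hw]
  rfl

/-- `(x,y) □_n (u,v)` iff `(E x, E y) □_{n+1} (E u, E v)`. -/
theorem square_rel_iff_exp (w : ℕ) (hw : 2 ≤ w) (n : ℕ) :
    ∀ x ∈ Set.range ((E w)^[n]), ∀ y ∈ Set.range ((E w)^[n]),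
    ∀ u ∈ Set.range ((E w)^[n]), ∀ v ∈ Set.range ((E w)^[n]),
      (Fadd w n x v = Fadd w n y u ↔
       Fadd w (n+1) (w ^ x) (w ^ v) = Fadd w (n+1) (w ^ y) (w ^ u)) := by
  intro x _ y _ u _ v _
  rw [Fadd_succ_pow_pow w hw, Fadd_succ_pow_pow w hw]
  exact (Nat.pow_right_injective hw).eq_iff.symm
end

section
/- For every n : ℕ and all x, y, u, v ∈ Set.range (E^[n]): Fmul n x v = Fmul n y u if and only if Fmul (n+1) (w ^ x) (w ^ v) = Fmul (n+1) (w ^ y) (w ^ u). (This is the content, for nonnegative representatives, of the paper's Proposition that (x,y) ⊠_n (u,v) iff (E x, E y) ⊠_{n+1} (E u, E v), showing that E generates an isomorphism between consecutive quotient fields.) -/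
theorem Fmul_succ (w n a b : ℕ) :
    Fmul w (n + 1) a b = E w (Fmul w n (Nat.log w a) (Nat.log w b)) := by
  rw [Fmul, Fmul, Function.iterate_succ_apply', Function.iterate_succ_apply,
    Function.iterate_succ_apply]

theorem Fmul_succ_pow {w : ℕ} (hw : 1 < w) (n a b : ℕ) :
    Fmul w (n + 1) (w ^ a) (w ^ b) = w ^ Fmul w n a b := by
  rw [Fmul_succ, Nat.log_pow hw, Nat.log_pow hw, E]

/-- `(x,y) ⊠_n (u,v)` iff `(E x, E y) ⊠_{n+1} (E u, E v)` for nonnegative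
representatives. -/
theorem boxtimes_rel_iff_exp (w : ℕ) (hw : 2 ≤ w) (n : ℕ) :
    ∀ x ∈ Set.range ((E w)^[n]), ∀ y ∈ Set.range ((E w)^[n]),
    ∀ u ∈ Set.range ((E w)^[n]), ∀ v ∈ Set.range ((E w)^[n]),
      (Fmul w n x v = Fmul w n y u ↔
       Fmul w (n+1) (w ^ x) (w ^ v) = Fmul w (n+1) (w ^ y) (w ^ u)) := by
  intro x _ y _ u _ v _
  rw [Fmul_succ_pow hw, Fmul_succ_pow hw]
  exact (Nat.pow_right_injective hw).eq_iff.symm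
end

section
/- For every n : ℕ, the level-(n+1) real set is the set of elements of the level-n real set lying strictly above the level-n additive identity: Set.range (expω^[n+1]) = {x ∈ Set.range (expω^[n]) | expω^[n] 0 < x}. In particular ℝ_{n+1} = ℝ_n⁺. -/
/-- The real exponential function base `ω`: `expω ω x = ω ^ x` (real rpow). -/
noncomputable def expω (ω : ℝ) (x : ℝ) : ℝ := ω ^ x

/-- The real logarithm base `ω`. -/
noncomputable def logω (ω : ℝ) (x : ℝ) : ℝ := Real.logb ω x

/-- The embedded commutative hyperoperation `•_n` (level-`n` addition) on ℝ. -/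
noncomputable def badd (ω : ℝ) (n : ℕ) (a b : ℝ) : ℝ :=
  (expω ω)^[n] ((logω ω)^[n] a + (logω ω)^[n] b)

/-- The embedded commutative hyperoperation `•_{n+1}` (level-`n` multiplication) on ℝ. -/
noncomputable def bmul (ω : ℝ) (n : ℕ) (a b : ℝ) : ℝ :=
  (expω ω)^[n] ((logω ω)^[n] a * (logω ω)^[n] b)

theorem StrictMono.range_comp_of_range_eq_Ioi {α β γ : Type*} [LinearOrder α] [Preorder β]
    {f : α → β} (hf : StrictMono f) {g : γ → α} {a : α} (hg : Set.range g = Set.Ioi a) :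
    Set.range (f ∘ g) = {x ∈ Set.range f | f a < x} := by
  rw [Set.range_comp, hg]
  ext x
  constructor
  · rintro ⟨y, hy, rfl⟩
    exact ⟨⟨y, rfl⟩, hf hy⟩
  · rintro ⟨⟨y, rfl⟩, hy⟩
    exact ⟨y, hf.lt_iff_lt.mp hy, rfl⟩

theorem expω_strictMono {ω : ℝ} (hω : 1 < ω) : StrictMono (expω ω) :=
  fun _ _ h => Real.rpow_lt_rpow_of_exponent_lt hω h

theorem range_expω {ω : ℝ} (hω : 1 < ω) : Set.range (expω ω) = Set.Ioi 0 := by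
  have hω₀ : 0 < ω := zero_lt_one.trans hω
  ext y
  constructor
  · rintro ⟨x, rfl⟩
    exact Real.rpow_pos_of_pos hω₀ x
  · intro hy
    exact ⟨Real.logb ω y, Real.rpow_logb hω₀ hω.ne' hy⟩

/-- The level-`(n+1)` real set consists of the elements of the level-`n` real set
lying strictly above the level-`n` additive identity: `ℝ_{n+1} = ℝ_n⁺`. -/
theorem level_real_succ_eq_pos (ω : ℝ) (hω : 1 < ω) (n : ℕ) :
    Set.range ((expω ω)^[n+1]) =
      {x ∈ Set.range ((expω ω)^[n]) | (expω ω)^[n] 0 < x} := by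
  rw [Function.iterate_succ]
  exact ((expω_strictMono hω).iterate n).range_comp_of_range_eq_Ioi (range_expω hω)
end
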